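/- With the ICW exchangeable pair construction, (1/λ)·E[|E[ |(X_n − X'_n) + c·σ²·(X̃_n − X̃'_n)|·(X_n − X'_n) | F_n]|] ≤ 2·E[|R̄_3 + R̄_4 + R̄_5 + Ř_3 + Ř_4 + Ř_5|], where R̄_3 := (1/χ_n)·(1/n)∑_i (tanh(t_i*) − tanh((β w_i/E[W_n])·m̃_n^i + h)), R̄_4 := (1/χ_n)·(1/n)∑_i (E_{μ_n}[σ_i] − tanh(t_i*)), R̄_5 := (1/χ_n)·(1/n)∑_i (σ_i − E_{μ_n}[σ_i]), Ř_3 := (c·σ²/√(χ_n·χ̃_n))·(1/n)∑_i w_i·(tanh(t_i*) − tanh((β w_i/E[W_n])·m̃_n^i + h)), Ř_4 := (c·σ²/√(χ_n·χ̃_n))·(1/n)∑_i w_i·(E_{μ_n}[σ_i] − tanh(t_i*)), Ř_5 := (c·σ²/√(χ_n·χ̃_n))·(1/n)∑_i w_i·(σ_i − E_{μ_n}[σ_i]). -/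

import Mathlib

open Real BigOperators Finset MeasureTheory Filter ProbabilityTheory Topology

noncomputable section

namespace ICW

/-- The real spin value associated to a Boolean: `true ↦ 1`, `false ↦ -1`. -/
def spin (b : Bool) : ℝ := if b then 1 else -1

/-- `E[W_n^k] = (1/n) ∑_i w_i^k`. -/
def EWk (n : ℕ) (w : Fin n → ℝ) (k : ℕ) : ℝ := (1 / n : ℝ) * ∑ i, (w i) ^ k

/-- `E[W_n] = (1/n) ∑_i w_i`. -/
def EW (n : ℕ) (w : Fin n → ℝ) : ℝ := (1 / n : ℝ) * ∑ i, w i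

/-- The (negative) Hamiltonian of the inhomogeneous Curie–Weiss model. -/
def ham (n : ℕ) (w : Fin n → ℝ) (β h : ℝ) (σ : Fin n → Bool) : ℝ :=
  β / (2 * ∑ i, w i) * (∑ i, w i * spin (σ i)) ^ 2 + h * ∑ i, spin (σ i)

/-- Unnormalized Boltzmann–Gibbs weight. -/
def wt (n : ℕ) (w : Fin n → ℝ) (β h : ℝ) (σ : Fin n → Bool) : ℝ :=
  Real.exp (ham n w β h σ)

/-- Partition function `Z_n`. -/
def Z (n : ℕ) (w : Fin n → ℝ) (β h : ℝ) : ℝ := ∑ σ : Fin n → Bool, wt n w β h σ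

/-- Expectation under the ICW measure `μ_n`. -/
def icwE (n : ℕ) (w : Fin n → ℝ) (β h : ℝ) (f : (Fin n → Bool) → ℝ) : ℝ :=
  (∑ σ : Fin n → Bool, wt n w β h σ * f σ) / Z n w β h

open Classical in
/-- Probability of an event under the ICW measure `μ_n`. -/
def icwP (n : ℕ) (w : Fin n → ℝ) (β h : ℝ) (A : (Fin n → Bool) → Prop) : ℝ :=
  icwE n w β h (fun σ => if A σ then 1 else 0)

/-- Magnetization `m_n`. -/
def mn (n : ℕ) (σ : Fin n → Bool) : ℝ := (1 / n : ℝ) * ∑ i, spin (σ i)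

/-- Weighted magnetization `m̃_n`. -/
def mtil (n : ℕ) (w : Fin n → ℝ) (σ : Fin n → Bool) : ℝ :=
  (1 / n : ℝ) * ∑ i, w i * spin (σ i)

/-- Weighted magnetization leaving out spin `i`, `m̃_n^i`. -/
def mtilI (n : ℕ) (w : Fin n → ℝ) (σ : Fin n → Bool) (i : Fin n) : ℝ :=
  (1 / n : ℝ) * ∑ j ∈ Finset.univ.erase i, w j * spin (σ j)

/-- Argument `√(β/E[W_n])·w_i·x + h`. -/
def arg (n : ℕ) (w : Fin n → ℝ) (β h x : ℝ) (i : Fin n) : ℝ :=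
  Real.sqrt (β / EW n w) * w i * x + h

/-- `G_n(x)`. -/
def Gfun (n : ℕ) (w : Fin n → ℝ) (β h : ℝ) (x : ℝ) : ℝ :=
  x ^ 2 / 2 - (1 / n : ℝ) * ∑ i, Real.log (Real.cosh (arg n w β h x i))

/-- `G_n(x; s)` (with tilted argument `x+s`). -/
def GfunS (n : ℕ) (w : Fin n → ℝ) (β h : ℝ) (x s : ℝ) : ℝ :=
  x ^ 2 / 2 - (1 / n : ℝ) * ∑ i, Real.log (Real.cosh (arg n w β h (x + s) i))

/-- `G_n'(x)`. -/
def Gfun' (n : ℕ) (w : Fin n → ℝ) (β h : ℝ) (x : ℝ) : ℝ :=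
  x - (1 / n : ℝ) * ∑ i, Real.sqrt (β / EW n w) * w i * Real.tanh (arg n w β h x i)

/-- `G_n''(x)`. -/
def Gfun'' (n : ℕ) (w : Fin n → ℝ) (β h : ℝ) (x : ℝ) : ℝ :=
  1 - β / EW n w * ((1 / n : ℝ) * ∑ i, (1 - Real.tanh (arg n w β h x i) ^ 2) * (w i) ^ 2)

/-- `x` has the same sign as `h` (and is `0` when `h = 0`). -/
def SameSign (h x : ℝ) : Prop :=
  (0 < h ∧ 0 < x) ∨ (h < 0 ∧ x < 0) ∨ (h = 0 ∧ x = 0)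

/-- `M_n`, defined from a solution `x` of the fixed point equation. -/
def Mn (n : ℕ) (w : Fin n → ℝ) (β h x : ℝ) : ℝ :=
  (1 / n : ℝ) * ∑ i, Real.tanh (arg n w β h x i)

/-- The susceptibility `χ_n`, defined from a solution `x` of the fixed point equation. -/
def chiN (n : ℕ) (w : Fin n → ℝ) (β h x : ℝ) : ℝ :=
  1 - (1 / n : ℝ) * ∑ i, Real.tanh (arg n w β h x i) ^ 2
    + β / EW n w * ((1 / n : ℝ) * ∑ i, (1 - Real.tanh (arg n w β h x i) ^ 2) * w i) ^ 2
      / Gfun'' n w β h x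

/-- `M̃_n`. -/
def Mtil (n : ℕ) (w : Fin n → ℝ) (β x : ℝ) : ℝ := Real.sqrt (EW n w / β) * x

/-- `χ̃_n`. -/
def chiTil (n : ℕ) (w : Fin n → ℝ) (β h x : ℝ) : ℝ :=
  ((1 / n : ℝ) * ∑ i, (1 - Real.tanh (arg n w β h x i) ^ 2) * (w i) ^ 2) / Gfun'' n w β h x

/-- The normalized magnetization `X_n` (as a function of the configuration),
where `x` is the relevant solution of the fixed point equation. -/
def Xn (n : ℕ) (w : Fin n → ℝ) (β h x : ℝ) (σ : Fin n → Bool) : ℝ :=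
  Real.sqrt n * (mn n σ - Mn n w β h x) / Real.sqrt (chiN n w β h x)

/-- The normalized weighted magnetization `X̃_n`. -/
def Xtil (n : ℕ) (w : Fin n → ℝ) (β h x : ℝ) (σ : Fin n → Bool) : ℝ :=
  Real.sqrt n * (mtil n w σ - Mtil n w β x) / Real.sqrt (chiTil n w β h x)

/-- The standard normal cumulative distribution function. -/
def stdGaussCDF (z : ℝ) : ℝ := ((gaussianReal 0 1) (Set.Iic z)).toReal

/-- Kolmogorov distance between the law of `X` under `μ_n` and the standard normal law. -/
def dK (n : ℕ) (w : Fin n → ℝ) (β h : ℝ) (X : (Fin n → Bool) → ℝ) : ℝ :=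
  ⨆ z : ℝ, |icwP n w β h (fun σ => X σ ≤ z) - stdGaussCDF z|

/-- Weight regularity condition (i): the empirical weight distribution converges weakly to
the law `ν` of `W`, which is a probability measure with `E[W] > 0`. -/
def WeightRegI (w : (n : ℕ) → Fin n → ℝ) (ν : Measure ℝ) : Prop :=
  (∀ n i, 0 < w n i) ∧ IsProbabilityMeasure ν ∧
    (∀ f : BoundedContinuousFunction ℝ ℝ,
      Tendsto (fun n : ℕ => (1 / n : ℝ) * ∑ i, f (w n i)) atTop (𝓝 (∫ x, f x ∂ν))) ∧
    Integrable (fun x => x) ν ∧ 0 < ∫ x, x ∂ν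

/-- Weight regularity condition (ii): `E[W_n²] → E[W²] < ∞`. -/
def WeightRegII (w : (n : ℕ) → Fin n → ℝ) (ν : Measure ℝ) : Prop :=
  Integrable (fun x => x ^ 2) ν ∧
    Tendsto (fun n => EWk n (w n) 2) atTop (𝓝 (∫ x, x ^ 2 ∂ν))

/-- Weight regularity condition (iii): `E[W_n³] → E[W³] < ∞`. -/
def WeightRegIII (w : (n : ℕ) → Fin n → ℝ) (ν : Measure ℝ) : Prop :=
  Integrable (fun x => x ^ 3) ν ∧
    Tendsto (fun n => EWk n (w n) 3) atTop (𝓝 (∫ x, x ^ 3 ∂ν))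

/-- The critical inverse temperature `β_c = E[W]/E[W²]`. -/
def betaC (ν : Measure ℝ) : ℝ := (∫ x, x ∂ν) / (∫ x, x ^ 2 ∂ν)

/-- The uniqueness regime `U`. -/
def Uniq (ν : Measure ℝ) (β h : ℝ) : Prop :=
  (0 ≤ β ∧ h ≠ 0) ∨ (0 < β ∧ β < betaC ν ∧ h = 0)

/-- Probability that spin `i` equals `+1` given the remaining spins. -/
def pPlus (n : ℕ) (w : Fin n → ℝ) (β h : ℝ) (σ : Fin n → Bool) (i : Fin n) : ℝ :=
  wt n w β h (Function.update σ i true) /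
    (wt n w β h (Function.update σ i true) + wt n w β h (Function.update σ i false))

/-- Conditional expectation given `F_n` (the σ-algebra generated by `σ`) of a function of
`(σ, I, σ'_I)`, where `I` is uniform on `[n]` and `σ'_I` is resampled from the conditional
distribution of the `I`-th spin given the others. -/
def condAvg (n : ℕ) (w : Fin n → ℝ) (β h : ℝ)
    (f : (Fin n → Bool) → Fin n → Bool → ℝ) (σ : Fin n → Bool) : ℝ :=
  (1 / n : ℝ) * ∑ i, (pPlus n w β h σ i * f σ i true + (1 - pPlus n w β h σ i) * f σ i false)

/-- The increment `X_n − X'_n` as a function of `(σ, I, σ'_I)`. -/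
def XnD (n : ℕ) (w : Fin n → ℝ) (β h x : ℝ) (σ : Fin n → Bool) (i : Fin n) (b : Bool) : ℝ :=
  (spin (σ i) - spin b) / (Real.sqrt n * Real.sqrt (chiN n w β h x))

/-- The increment `X̃_n − X̃'_n` as a function of `(σ, I, σ'_I)`. -/
def XtilD (n : ℕ) (w : Fin n → ℝ) (β h x : ℝ) (σ : Fin n → Bool) (i : Fin n) (b : Bool) : ℝ :=
  w i * (spin (σ i) - spin b) / (Real.sqrt n * Real.sqrt (chiTil n w β h x))

/-- The constant `c` in the regression equation. -/
def cconst (n : ℕ) (w : Fin n → ℝ) (β h x : ℝ) : ℝ :=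
  Real.sqrt (chiTil n w β h x) / Real.sqrt (chiN n w β h x) * (β / EW n w) *
    ((1 / n : ℝ) * ∑ i, (1 - Real.tanh (arg n w β h x i) ^ 2) * w i)

end ICW

namespace ICW

/-- Error term `R̄_3`. -/
def Rbar3 (n : ℕ) (w : Fin n → ℝ) (β h x : ℝ) (σ : Fin n → Bool) : ℝ :=
  1 / chiN n w β h x * ((1 / n : ℝ) * ∑ i,
    (Real.tanh (arg n w β h x i) - Real.tanh (β * w i / EW n w * mtilI n w σ i + h)))

/-- Error term `R̄_4`. -/
def Rbar4 (n : ℕ) (w : Fin n → ℝ) (β h x : ℝ) : ℝ :=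
  1 / chiN n w β h x * ((1 / n : ℝ) * ∑ i,
    (icwE n w β h (fun τ => spin (τ i)) - Real.tanh (arg n w β h x i)))

/-- Error term `R̄_5`. -/
def Rbar5 (n : ℕ) (w : Fin n → ℝ) (β h x : ℝ) (σ : Fin n → Bool) : ℝ :=
  1 / chiN n w β h x * ((1 / n : ℝ) * ∑ i,
    (spin (σ i) - icwE n w β h (fun τ => spin (τ i))))

/-- Error term `Ř_3`. -/
def Rchk3 (n : ℕ) (w : Fin n → ℝ) (β h x : ℝ) (σ : Fin n → Bool) : ℝ :=
  cconst n w β h x * (1 / Gfun'' n w β h x) / Real.sqrt (chiN n w β h x * chiTil n w β h x) *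
    ((1 / n : ℝ) * ∑ i, w i *
      (Real.tanh (arg n w β h x i) - Real.tanh (β * w i / EW n w * mtilI n w σ i + h)))

/-- Error term `Ř_4`. -/
def Rchk4 (n : ℕ) (w : Fin n → ℝ) (β h x : ℝ) : ℝ :=
  cconst n w β h x * (1 / Gfun'' n w β h x) / Real.sqrt (chiN n w β h x * chiTil n w β h x) *
    ((1 / n : ℝ) * ∑ i, w i *
      (icwE n w β h (fun τ => spin (τ i)) - Real.tanh (arg n w β h x i)))

/-- Error term `Ř_5`. -/
def Rchk5 (n : ℕ) (w : Fin n → ℝ) (β h x : ℝ) (σ : Fin n → Bool) : ℝ :=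
  cconst n w β h x * (1 / Gfun'' n w β h x) / Real.sqrt (chiN n w β h x * chiTil n w β h x) *
    ((1 / n : ℝ) * ∑ i, w i *
      (spin (σ i) - icwE n w β h (fun τ => spin (τ i))))

/-! The spin increment `d = σ_I - σ'_I` takes values in `{0, ±2}`, so `|d| * d = 2 * d`, and both
increments `X_n - X'_n` and `X̃_n - X̃'_n` are nonnegative multiples of `d`. Hence the integrand is
`2 * a_I * d` for explicit constants `a_i ≥ 0`, and averaging over the resampled spin replaces
`σ'_I` by its conditional mean `tanh (β w_I m̃_n^I / E[W_n] + h)` (heat-bath rule). Multiplied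
by `n`, the conditional expectation is then exactly `2 (R̄₃ + R̄₄ + R̄₅ + Ř₃ + Ř₄ + Ř₅)`,
whose three pieces telescope; so the bound holds with equality. -/

@[simp] lemma spin_true : spin true = 1 := rfl

@[simp] lemma spin_false : spin false = -1 := rfl

lemma abs_spin_sub_mul_self (a b : Bool) :
    |spin a - spin b| * (spin a - spin b) = 2 * (spin a - spin b) := by
  cases a <;> cases b <;> norm_num

lemma two_mul_exp_div_exp_add_exp_sub_one (a b : ℝ) :
    2 * (exp a / (exp a + exp b)) - 1 = tanh ((a - b) / 2) := by
  have ea : exp a = exp ((a - b) / 2) * exp ((a + b) / 2) := by rw [← exp_add]; ring_nf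
  have eb : exp b = exp (-((a - b) / 2)) * exp ((a + b) / 2) := by rw [← exp_add]; ring_nf
  rw [tanh_eq, ea, eb]
  have hp := exp_pos ((a - b) / 2)
  have hm := exp_pos (-((a - b) / 2))
  have hc := exp_pos ((a + b) / 2)
  field_simp
  ring

lemma sum_comp_update {ι α M : Type*} [Fintype ι] [DecidableEq ι] [AddCommMonoid M]
    (g : ι → α → M) (σ : ι → α) (i : ι) (b : α) :
    ∑ j, g j (Function.update σ i b j) = g i b + ∑ j ∈ univ.erase i, g j (σ j) := by
  rw [← add_sum_erase _ _ (mem_univ i), Function.update_self]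
  congr 1
  exact sum_congr rfl fun j hj => by rw [Function.update_of_ne (ne_of_mem_erase hj)]

section

variable {n : ℕ} {w : Fin n → ℝ} {β h x : ℝ}

lemma ham_update_true_sub_false (σ : Fin n → Bool) (i : Fin n) :
    ham n w β h (Function.update σ i true) - ham n w β h (Function.update σ i false)
      = 2 * (β * w i / EW n w * mtilI n w σ i + h) := by
  have hn : (n : ℝ) ≠ 0 := Nat.cast_ne_zero.2 (Fin.pos i).ne'
  unfold ham EW mtilI
  rw [sum_comp_update (fun j s => w j * spin s), sum_comp_update (fun j s => w j * spin s),
    sum_comp_update (fun _ s => spin s), sum_comp_update (fun _ s => spin s), spin_true, spin_false]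
  -- When `∑ w = 0` both sides are `2 h`, by the convention `x / 0 = 0`.
  by_cases hL : ∑ j, w j = 0
  · rw [hL]
    simp only [mul_zero, div_zero, zero_mul, zero_add]
    ring
  · field_simp
    ring

lemma two_mul_pPlus_sub_one (σ : Fin n → Bool) (i : Fin n) :
    2 * pPlus n w β h σ i - 1 = tanh (β * w i / EW n w * mtilI n w σ i + h) := by
  rw [pPlus, wt, wt, two_mul_exp_div_exp_add_exp_sub_one, ham_update_true_sub_false]
  ring_nf

lemma condAvg_mul_spin_sub (g : Fin n → ℝ) (σ : Fin n → Bool) :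
    condAvg n w β h (fun τ i b => g i * (spin (τ i) - spin b)) σ
      = (1 / n : ℝ) * ∑ i, g i * (spin (σ i) - tanh (β * w i / EW n w * mtilI n w σ i + h)) := by
  unfold condAvg
  congr 1
  refine sum_congr rfl fun i _ => ?_
  rw [← two_mul_pPlus_sub_one]
  simp only [spin_true, spin_false]
  ring

lemma abs_XnD_add_mul_XtilD_mul_XnD {K : ℝ} {σ : Fin n → Bool} {i : Fin n}
    (hχ : 0 < chiN n w β h x) (hχt : 0 < chiTil n w β h x) (hK : 0 ≤ K * w i) (b : Bool) :
    |XnD n w β h x σ i b + K * XtilD n w β h x σ i b| * XnD n w β h x σ i b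
      = 2 / n * (1 / chiN n w β h x + K / √(chiN n w β h x * chiTil n w β h x) * w i)
          * (spin (σ i) - spin b) := by
  set d := spin (σ i) - spin b
  set a := 1 / √(chiN n w β h x) + K * w i / √(chiTil n w β h x)
  have ha : 0 ≤ a := add_nonneg (by positivity) (div_nonneg hK (sqrt_nonneg _))
  have hsum : XnD n w β h x σ i b + K * XtilD n w β h x σ i b = d * (a / √n) := by
    simp only [XnD, XtilD, a, d, div_eq_mul_inv, mul_inv]
    ring
  have hn : (0 : ℝ) < n := Nat.cast_pos.2 (Fin.pos i)
  have hχs := mul_self_sqrt hχ.le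
  have hsχ := sqrt_pos.2 hχ
  have hsχt := sqrt_pos.2 hχt
  rw [hsum, abs_mul, abs_of_nonneg (div_nonneg ha (sqrt_nonneg _))]
  calc |d| * (a / √n) * XnD n w β h x σ i b
      = |d| * d * (a / (√n * √n * √(chiN n w β h x))) := by
        simp only [XnD, d, div_eq_mul_inv, mul_inv]
        ring
    _ = _ := by
        rw [mul_self_sqrt hn.le, abs_spin_sub_mul_self, sqrt_mul hχ.le]
        simp only [a, d]
        field_simp
        linear_combination -(spin (σ i) - spin b) * √(chiTil n w β h x) * hχs

lemma Rbar3_add_Rbar4_add_Rbar5 (σ : Fin n → Bool) :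
    Rbar3 n w β h x σ + Rbar4 n w β h x + Rbar5 n w β h x σ
      = 1 / chiN n w β h x * ((1 / n : ℝ) *
          ∑ i, (spin (σ i) - tanh (β * w i / EW n w * mtilI n w σ i + h))) := by
  simp only [Rbar3, Rbar4, Rbar5, ← mul_add, ← sum_add_distrib]
  congr 3 with i
  ring

lemma Rchk3_add_Rchk4_add_Rchk5 (σ : Fin n → Bool) :
    Rchk3 n w β h x σ + Rchk4 n w β h x + Rchk5 n w β h x σ
      = cconst n w β h x * (1 / Gfun'' n w β h x) / √(chiN n w β h x * chiTil n w β h x) *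
          ((1 / n : ℝ) * ∑ i, w i * (spin (σ i) - tanh (β * w i / EW n w * mtilI n w σ i + h))) := by
  simp only [Rchk3, Rchk4, Rchk5, ← mul_add, ← sum_add_distrib]
  congr 3 with i
  ring

lemma natCast_mul_condAvg_eq_two_mul_error_terms (hχ : 0 < chiN n w β h x)
    (hχt : 0 < chiTil n w β h x) (hK : ∀ i, 0 ≤ cconst n w β h x * (1 / Gfun'' n w β h x) * w i)
    (σ : Fin n → Bool) :
    (n : ℝ) * condAvg n w β h (fun τ i b =>
        |XnD n w β h x τ i b + cconst n w β h x * (1 / Gfun'' n w β h x) *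
          XtilD n w β h x τ i b| * XnD n w β h x τ i b) σ
      = 2 * (Rbar3 n w β h x σ + Rbar4 n w β h x + Rbar5 n w β h x σ
          + Rchk3 n w β h x σ + Rchk4 n w β h x + Rchk5 n w β h x σ) := by
  simp_rw [abs_XnD_add_mul_XtilD_mul_XnD hχ hχt (hK _)]
  simp only [add_assoc (Rbar3 n w β h x σ + Rbar4 n w β h x + Rbar5 n w β h x σ)]
  rw [condAvg_mul_spin_sub, Rbar3_add_Rbar4_add_Rbar5, Rchk3_add_Rchk4_add_Rchk5]
  simp only [mul_sum, ← sum_add_distrib]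
  congr 1 with i
  field_simp

lemma EW_nonneg (hw : ∀ i, 0 ≤ w i) : 0 ≤ EW n w :=
  mul_nonneg (by positivity) (sum_nonneg fun i _ => hw i)

lemma one_sub_tanh_sq_nonneg (t : ℝ) : 0 ≤ 1 - tanh t ^ 2 :=
  sub_nonneg.2 (tanh_sq_lt_one t).le

lemma chiN_pos (hn : 0 < n) (hw : ∀ i, 0 ≤ w i) (hβ : 0 ≤ β) (hG : 0 < Gfun'' n w β h x) :
    0 < chiN n w β h x := by
  have hne : (univ : Finset (Fin n)).Nonempty := univ_nonempty_iff.2 ⟨⟨0, hn⟩⟩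
  have hmean : (1 / n : ℝ) * ∑ i, tanh (arg n w β h x i) ^ 2 < 1 := by
    have hlt : ∑ i, tanh (arg n w β h x i) ^ 2 < ∑ _i : Fin n, (1 : ℝ) :=
      sum_lt_sum_of_nonempty hne fun i _ => tanh_sq_lt_one _
    rw [sum_const, card_univ, Fintype.card_fin, nsmul_one] at hlt
    rwa [one_div_mul_eq_div, div_lt_one (by exact_mod_cast hn)]
  have hcorr : 0 ≤ β / EW n w *
      ((1 / n : ℝ) * ∑ i, (1 - tanh (arg n w β h x i) ^ 2) * w i) ^ 2 / Gfun'' n w β h x :=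
    div_nonneg (mul_nonneg (div_nonneg hβ (EW_nonneg hw)) (sq_nonneg _)) hG.le
  unfold chiN
  linarith

lemma chiTil_pos (hn : 0 < n) (hw : ∀ i, 0 < w i) (hG : 0 < Gfun'' n w β h x) :
    0 < chiTil n w β h x := by
  have hne : (univ : Finset (Fin n)).Nonempty := univ_nonempty_iff.2 ⟨⟨0, hn⟩⟩
  have hsum : 0 < ∑ i, (1 - tanh (arg n w β h x i) ^ 2) * w i ^ 2 :=
    sum_pos (fun i _ => mul_pos (sub_pos.2 (tanh_sq_lt_one _)) (pow_pos (hw i) 2)) hne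
  unfold chiTil
  positivity

lemma cconst_mul_one_div_Gfun''_nonneg (hw : ∀ i, 0 ≤ w i) (hβ : 0 ≤ β)
    (hG : 0 ≤ Gfun'' n w β h x) : 0 ≤ cconst n w β h x * (1 / Gfun'' n w β h x) := by
  have hsum : 0 ≤ ∑ i, (1 - tanh (arg n w β h x i) ^ 2) * w i :=
    sum_nonneg fun i _ => mul_nonneg (one_sub_tanh_sq_nonneg _) (hw i)
  have hβW := div_nonneg hβ (EW_nonneg (n := n) hw)
  unfold cconst
  positivity

lemma mul_icwE (c : ℝ) (f : (Fin n → Bool) → ℝ) :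
    c * icwE n w β h f = icwE n w β h (fun σ => c * f σ) := by
  simp only [icwE, mul_div_assoc', mul_sum]
  congr 1
  exact sum_congr rfl fun _ _ => by ring

end

theorem second_stein_term_bound_general (n : ℕ) (hn : 0 < n) (w : Fin n → ℝ) (hw : ∀ i, 0 < w i)
    (β h : ℝ) (hβ : 0 < β) (x : ℝ)
    (hG'' : 0 < Gfun'' n w β h x) :
    (n : ℝ) * icwE n w β h (fun σ => |condAvg n w β h (fun τ i b =>
        |XnD n w β h x τ i b + cconst n w β h x * (1 / Gfun'' n w β h x) *
          XtilD n w β h x τ i b| * XnD n w β h x τ i b) σ|)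
      ≤ 2 * icwE n w β h (fun σ => |Rbar3 n w β h x σ + Rbar4 n w β h x + Rbar5 n w β h x σ
          + Rchk3 n w β h x σ + Rchk4 n w β h x + Rchk5 n w β h x σ|) := by
  have hw' : ∀ i, 0 ≤ w i := fun i => (hw i).le
  have hK : ∀ i, 0 ≤ cconst n w β h x * (1 / Gfun'' n w β h x) * w i :=
    fun i => mul_nonneg (cconst_mul_one_div_Gfun''_nonneg hw' hβ.le hG''.le) (hw' i)
  refine le_of_eq ?_
  rw [mul_icwE, mul_icwE]
  congr 1 with σ
  rw [← abs_two, ← abs_mul, ← abs_of_nonneg (Nat.cast_nonneg (α := ℝ) n), ← abs_mul,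
    natCast_mul_condAvg_eq_two_mul_error_terms (chiN_pos hn hw' hβ.le hG'')
      (chiTil_pos hn hw hG'') hK]

/-- **Bound on the second Stein term** for the ICW exchangeable pair, with `λ = 1/n` and
`σ² = 1/G_n''(x_n*)`; the conditional expectation given `F_n` is the average over the
uniformly chosen coordinate `I` and the resampled spin `σ'_I`. -/
theorem second_stein_term_bound (n : ℕ) (hn : 0 < n) (w : Fin n → ℝ) (hw : ∀ i, 0 < w i)
    (β h : ℝ) (hβ : 0 < β) (x : ℝ) (hx : Gfun' n w β h x = 0) (hsign : SameSign h x)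
    (hG'' : 0 < Gfun'' n w β h x) :
    (n : ℝ) * icwE n w β h (fun σ => |condAvg n w β h (fun τ i b =>
        |XnD n w β h x τ i b + cconst n w β h x * (1 / Gfun'' n w β h x) *
          XtilD n w β h x τ i b| * XnD n w β h x τ i b) σ|)
      ≤ 2 * icwE n w β h (fun σ => |Rbar3 n w β h x σ + Rbar4 n w β h x + Rbar5 n w β h x σ
          + Rchk3 n w β h x σ + Rchk4 n w β h x + Rchk5 n w β h x σ|) :=
  second_stein_term_bound_general n hn w hw β h hβ x hG''

end ICW
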